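/- arXiv:1512.09039 — 3 statements merged into one kernel-verified Lean document; each statement's English description precedes it below -/
import Mathlib

section
/- Almost sure decay of the disagreement: Under the differentially private Laplacian consensus dynamics with the stated assumptions, let θ̃(k) = θ(k) − ⟨θ(k)⟩𝟏_n = (I_n − (1/n)𝟏𝟏ᵀ) θ(k) denote the disagreement vector. Then P{ lim_{k→∞} θ̃(k) = 0 } = 1. -/
open MeasureTheory ProbabilityTheory Filter

/-- The Laplace distribution on `ℝ` with scale `b`, given by the density
`x ↦ (1/(2b)) exp(-|x|/b)` with respect to Lebesgue measure. -/
noncomputable def lap (b : ℝ) : Measure ℝ :=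
  volume.withDensity fun x => ENNReal.ofReal ((2 * b)⁻¹ * Real.exp (-|x| / b))

/-- The average `⟨v⟩ = (1/n) 𝟏ᵀ v` of the components of a vector. -/
noncomputable def ave {n : ℕ} (v : Fin n → ℝ) : ℝ := (∑ i, v i) / n

/-- The state trajectory of the dynamics `θ(k+1) = θ(k) - h L x(k) + S η(k)` with
messages `x(k) = θ(k) + η(k)`, initial state `θ0` and noise sequence `η`. -/
noncomputable def thetaSeq {n : ℕ} (L S : Matrix (Fin n) (Fin n) ℝ) (h : ℝ)
    (θ0 : Fin n → ℝ) (η : ℕ → Fin n → ℝ) : ℕ → Fin n → ℝ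
  | 0 => θ0
  | k + 1 =>
      thetaSeq L S h θ0 η k - h • L.mulVec (thetaSeq L S h θ0 η k + η k)
        + S.mulVec (η k)

open scoped Classical in
/-- The convergence point `θ_∞ = ⟨θ₀⟩ + ∑_{i=1}^n (s_i/n) ∑_{j=0}^∞ η_i(j)`,
set to `⟨θ₀⟩` on the event where some series `∑_{j=0}^∞ η_i(j)` fails to converge. -/
noncomputable def thetaInf {n : ℕ} (θ0 : Fin n → ℝ) (s : Fin n → ℝ)
    (η : ℕ → Fin n → ℝ) : ℝ :=
  if ∀ i, Summable (fun j => η j i) then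
    ave θ0 + ∑ i, (s i / n) * ∑' j, η j i
  else ave θ0

/-!
The noise vanishes almost surely: for `q_i < r < 1` the Laplace tail gives
`P(|η_i(k)| ≥ r^k) ≤ c_i (q_i / r)^k`, which is summable, so Borel–Cantelli applies.
Pathwise, the disagreement `e(k)` satisfies `e(k+1) = (I - hL) e(k) + ε(k)` with `ε(k) → 0`, and
on the hyperplane `𝟏ᗮ`, where `e(k)` lives, `I - hL` is a strict Euclidean contraction:
`‖(I - hL) v‖² ≤ ‖v‖² - 2h(1 - h d_max)⟨v, Lv⟩`, and `⟨v, Lv⟩ > 0` for `0 ≠ v ⊥ 𝟏` because the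
graph is connected. Compactness of the unit sphere makes the contraction factor uniform, and a
uniform contraction driven by a vanishing input tends to zero.
-/

open Matrix Finset Topology

theorem LinearMap.exists_norm_le_mul_of_norm_lt {E : Type*} [NormedAddCommGroup E]
    [NormedSpace ℝ E] [FiniteDimensional ℝ E] (f : E →ₗ[ℝ] E) (U : Submodule ℝ E)
    (hf : ∀ x ∈ U, x ≠ 0 → ‖f x‖ < ‖x‖) :
    ∃ ρ, 0 ≤ ρ ∧ ρ < 1 ∧ ∀ x ∈ U, ‖f x‖ ≤ ρ * ‖x‖ := by
  set K := Metric.sphere (0 : E) 1 ∩ U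
  have hscale : ∀ ρ, 0 ≤ ρ → (∀ y ∈ K, ‖f y‖ ≤ ρ) → ∀ x ∈ U, ‖f x‖ ≤ ρ * ‖x‖ := by
    intro ρ hρ hK x hx
    rcases eq_or_ne x 0 with rfl | hx0
    · simp
    have hxpos : 0 < ‖x‖ := norm_pos_iff.2 hx0
    have hy : ‖x‖⁻¹ • x ∈ K := ⟨by simp [norm_smul, hxpos.ne'], U.smul_mem _ hx⟩
    have := hK _ hy
    rw [map_smul, norm_smul, norm_inv, norm_norm, inv_mul_le_iff₀ hxpos] at this
    linarith
  rcases K.eq_empty_or_nonempty with hK | hK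
  · exact ⟨0, le_rfl, one_pos, hscale 0 le_rfl (by simp [hK])⟩
  have hKc : IsCompact K :=
    (isCompact_sphere 0 1).inter_right (Submodule.closed_of_finiteDimensional U)
  obtain ⟨x₀, ⟨hx₀1, hx₀U⟩, hmax⟩ :=
    hKc.exists_isMaxOn hK f.continuous_of_finiteDimensional.norm.continuousOn
  have hx₀ : ‖x₀‖ = 1 := by simpa using hx₀1
  refine ⟨‖f x₀‖, norm_nonneg _, ?_, hscale _ (norm_nonneg _) fun y hy => hmax hy⟩
  simpa [hx₀] using hf x₀ hx₀U (by rintro rfl; simp at hx₀)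

theorem tendsto_zero_of_le_mul_add {ρ : ℝ} (hρ0 : 0 ≤ ρ) (hρ1 : ρ < 1) {u b : ℕ → ℝ}
    (hu : ∀ k, 0 ≤ u k) (hub : ∀ k, u (k + 1) ≤ ρ * u k + b k)
    (hb : Tendsto b atTop (𝓝 0)) : Tendsto u atTop (𝓝 0) := by
  refine tendsto_order.2 ⟨fun a ha => .of_forall fun k => ha.trans_le (hu k), fun a ha => ?_⟩
  obtain ⟨N, hN⟩ := eventually_atTop.1
    (hb.eventually (ge_mem_nhds (mul_pos (sub_pos.2 hρ1) (half_pos ha))))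
  have hexcess : ∀ k ≥ N, u k - a / 2 ≤ ρ ^ (k - N) * (u N - a / 2) := by
    intro k hk
    induction k, hk using Nat.le_induction with
    | base => simp
    | succ k hk ih =>
      rw [Nat.sub_add_comm hk, pow_succ]
      nlinarith [hub k, hN k hk]
  have hlim : Tendsto (fun k => a / 2 + ρ ^ (k - N) * (u N - a / 2)) atTop (𝓝 (a / 2)) := by
    simpa using ((tendsto_pow_atTop_nhds_zero_of_lt_one hρ0 hρ1).comp
      (tendsto_sub_atTop_nat N)).mul_const (u N - a / 2) |>.const_add (a / 2)
  filter_upwards [hlim.eventually (gt_mem_nhds (half_lt_self ha)), eventually_ge_atTop N]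
    with k hk hkN
  linarith [hexcess k hkN]

theorem EuclideanSpace.norm_toLp_sq {ι : Type*} [Fintype ι] (v : ι → ℝ) :
    ‖WithLp.toLp 2 v‖ ^ 2 = v ⬝ᵥ v := by
  rw [← real_inner_self_eq_norm_sq, EuclideanSpace.inner_toLp_toLp, star_trivial]

namespace Matrix

variable {ι : Type*} [Fintype ι] [DecidableEq ι]

def laplacian (A : Matrix ι ι ℝ) : Matrix ι ι ℝ :=
  diagonal (fun i => ∑ j, A i j) - A

theorem laplacian_mulVec_apply (A : Matrix ι ι ℝ) (v : ι → ℝ) (i : ι) :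
    (laplacian A *ᵥ v) i = ∑ j, A i j * (v i - v j) := by
  rw [laplacian, sub_mulVec, Pi.sub_apply, mulVec_diagonal, sum_mul]
  simp only [mulVec, dotProduct, mul_sub, sum_sub_distrib]

variable {A : Matrix ι ι ℝ}

theorem sum_laplacian_mulVec (hA : A.IsSymm) (v : ι → ℝ) : ∑ i, (laplacian A *ᵥ v) i = 0 := by
  have hanti : ∑ i, ∑ j, A i j * (v i - v j) = -∑ i, ∑ j, A i j * (v i - v j) := by
    conv_lhs => rw [sum_comm]
    simp only [← sum_neg_distrib]
    exact sum_congr rfl fun i _ => sum_congr rfl fun j _ => by rw [hA.apply i j]; ring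
  simp only [laplacian_mulVec_apply]
  linarith

theorem two_mul_dotProduct_laplacian_mulVec (hA : A.IsSymm) (v : ι → ℝ) :
    2 * (v ⬝ᵥ laplacian A *ᵥ v) = ∑ i, ∑ j, A i j * (v i - v j) ^ 2 := by
  have hswap : ∑ i, ∑ j, A i j * (v i * (v i - v j))
      = ∑ i, ∑ j, A i j * (v j * (v j - v i)) := by
    rw [sum_comm]
    exact sum_congr rfl fun i _ => sum_congr rfl fun j _ => by rw [hA.apply j i]
  have hv : v ⬝ᵥ laplacian A *ᵥ v = ∑ i, ∑ j, A i j * (v i * (v i - v j)) := by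
    simp only [dotProduct, laplacian_mulVec_apply, mul_sum]
    exact sum_congr rfl fun i _ => sum_congr rfl fun j _ => by ring
  rw [two_mul, hv]
  nth_rewrite 2 [hswap]
  rw [← sum_add_distrib]
  exact sum_congr rfl fun i _ => by rw [← sum_add_distrib]; exact sum_congr rfl fun j _ => by ring

theorem dotProduct_laplacian_mulVec_nonneg (hA : A.IsSymm) (hA0 : ∀ i j, 0 ≤ A i j)
    (v : ι → ℝ) : 0 ≤ v ⬝ᵥ laplacian A *ᵥ v := by
  have := two_mul_dotProduct_laplacian_mulVec hA v
  have : 0 ≤ ∑ i, ∑ j, A i j * (v i - v j) ^ 2 :=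
    sum_nonneg fun i _ => sum_nonneg fun j _ => mul_nonneg (hA0 i j) (sq_nonneg _)
  linarith

theorem laplacian_mulVec_dotProduct_self_le (hA : A.IsSymm) (hA0 : ∀ i j, 0 ≤ A i j) {d : ℝ}
    (hd : ∀ i, ∑ j, A i j ≤ d) (v : ι → ℝ) :
    (laplacian A *ᵥ v) ⬝ᵥ (laplacian A *ᵥ v) ≤ 2 * d * (v ⬝ᵥ laplacian A *ᵥ v) := by
  have hrow : ∀ i, (laplacian A *ᵥ v) i ^ 2 ≤ d * ∑ j, A i j * (v i - v j) ^ 2 := fun i => by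
    rw [laplacian_mulVec_apply]
    calc (∑ j, A i j * (v i - v j)) ^ 2 ≤ (∑ j, A i j) * ∑ j, A i j * (v i - v j) ^ 2 :=
          sum_sq_le_sum_mul_sum_of_sq_le_mul _ (fun j _ => hA0 i j)
            (fun j _ => mul_nonneg (hA0 i j) (sq_nonneg _)) (fun j _ => by ring_nf; rfl)
      _ ≤ d * ∑ j, A i j * (v i - v j) ^ 2 := by
          gcongr
          · exact sum_nonneg fun j _ => mul_nonneg (hA0 i j) (sq_nonneg _)
          · exact hd i
  calc (laplacian A *ᵥ v) ⬝ᵥ (laplacian A *ᵥ v) = ∑ i, (laplacian A *ᵥ v) i ^ 2 := by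
        simp [dotProduct, sq]
    _ ≤ ∑ i, d * ∑ j, A i j * (v i - v j) ^ 2 := sum_le_sum fun i _ => hrow i
    _ = 2 * d * (v ⬝ᵥ laplacian A *ᵥ v) := by
        rw [← mul_sum, ← two_mul_dotProduct_laplacian_mulVec hA]; ring

theorem norm_toLp_laplacian_step_lt (hA : A.IsSymm) (hA0 : ∀ i j, 0 ≤ A i j) {d : ℝ}
    (hd : ∀ i, ∑ j, A i j ≤ d) {h : ℝ} (hh0 : 0 < h) (hhd : h * d < 1) {v : ι → ℝ}
    (hLv : laplacian A *ᵥ v ≠ 0) :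
    ‖WithLp.toLp 2 (v - h • laplacian A *ᵥ v)‖ < ‖WithLp.toLp 2 v‖ := by
  have hwv := laplacian_mulVec_dotProduct_self_le hA hA0 hd v
  have hv := dotProduct_laplacian_mulVec_nonneg hA hA0 v
  set w := laplacian A *ᵥ v
  have hw : 0 < w ⬝ᵥ w := by
    rw [← EuclideanSpace.norm_toLp_sq]
    exact pow_pos (norm_pos_iff.2 fun h0 => hLv (congrArg WithLp.ofLp h0)) 2
  have hvw : 0 < v ⬝ᵥ w := hv.lt_of_ne fun h0 => by rw [← h0] at hwv; linarith
  refine lt_of_pow_lt_pow_left₀ 2 (norm_nonneg _) ?_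
  rw [EuclideanSpace.norm_toLp_sq, EuclideanSpace.norm_toLp_sq, sub_dotProduct, dotProduct_sub,
    dotProduct_sub, smul_dotProduct, dotProduct_smul, smul_dotProduct, dotProduct_smul,
    dotProduct_comm w v]
  simp only [smul_eq_mul]
  -- `h² ‖Lv‖² ≤ 2h (h d) ⟨v, Lv⟩ < 2h ⟨v, Lv⟩`
  nlinarith [mul_le_mul_of_nonneg_left hwv (sq_nonneg h), mul_pos (mul_pos hh0 hvw) (sub_pos.2 hhd)]

theorem laplacian_mulVec_ne_zero
    (hconn : ∀ v : ι → ℝ, laplacian A *ᵥ v = 0 → ∃ a : ℝ, v = fun _ => a)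
    {v : ι → ℝ} (hv : ∑ i, v i = 0) (hv0 : v ≠ 0) : laplacian A *ᵥ v ≠ 0 := by
  intro hLv
  obtain ⟨a, rfl⟩ := hconn v hLv
  obtain ⟨i, hi⟩ := Function.ne_iff.1 hv0
  simp only [sum_const, card_univ, nsmul_eq_mul, mul_eq_zero, Nat.cast_eq_zero] at hv
  have : Nonempty ι := ⟨i⟩
  exact hv.elim Fintype.card_ne_zero hi

theorem exists_norm_laplacian_step_le (hA : A.IsSymm) (hA0 : ∀ i j, 0 ≤ A i j) {d : ℝ}
    (hd : ∀ i, ∑ j, A i j ≤ d) {h : ℝ} (hh0 : 0 < h) (hhd : h * d < 1)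
    (hconn : ∀ v : ι → ℝ, laplacian A *ᵥ v = 0 → ∃ a : ℝ, v = fun _ => a) :
    ∃ ρ, 0 ≤ ρ ∧ ρ < 1 ∧ ∀ v : ι → ℝ, ∑ i, v i = 0 →
      ‖WithLp.toLp 2 (v - h • laplacian A *ᵥ v)‖ ≤ ρ * ‖WithLp.toLp 2 v‖ := by
  let U : Submodule ℝ (EuclideanSpace ℝ ι) := (ℝ ∙ WithLp.toLp 2 fun _ => 1)ᗮ
  have hU : ∀ v : ι → ℝ, WithLp.toLp 2 v ∈ U ↔ ∑ i, v i = 0 := fun v => by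
    rw [Submodule.mem_orthogonal_singleton_iff_inner_right, EuclideanSpace.inner_toLp_toLp]
    simp [dotProduct]
  have hstep : ∀ v : ι → ℝ, toLpLin 2 2 (1 - h • laplacian A) (WithLp.toLp 2 v)
      = WithLp.toLp 2 (v - h • laplacian A *ᵥ v) := fun v => by
    rw [toLpLin_toLp, toLin'_apply, sub_mulVec, one_mulVec, smul_mulVec]
  obtain ⟨ρ, hρ0, hρ1, hρ⟩ :=
    (toLpLin 2 2 (1 - h • laplacian A)).exists_norm_le_mul_of_norm_lt U fun x hx hx0 => by
      obtain ⟨v, rfl⟩ : ∃ v, x = WithLp.toLp 2 v := ⟨x.ofLp, rfl⟩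
      rw [hU] at hx
      rw [hstep]
      refine norm_toLp_laplacian_step_lt hA hA0 hd hh0 hhd (laplacian_mulVec_ne_zero hconn hx ?_)
      rintro rfl
      exact hx0 rfl
  exact ⟨ρ, hρ0, hρ1, fun v hv => hstep v ▸ hρ _ ((hU v).2 hv)⟩

end Matrix

noncomputable def disagreement {n : ℕ} (v : Fin n → ℝ) : Fin n → ℝ := fun i => v i - ave v

section Disagreement

variable {n : ℕ}

theorem sum_disagreement (v : Fin n → ℝ) : ∑ i, disagreement v i = 0 := by
  rcases n.eq_zero_or_pos with rfl | hn
  · simp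
  simp only [disagreement, ave, sum_sub_distrib, sum_const, card_univ, Fintype.card_fin,
    nsmul_eq_mul]
  rw [mul_div_cancel₀ _ (Nat.cast_ne_zero.2 hn.ne'), sub_self]

theorem disagreement_add (v w : Fin n → ℝ) :
    disagreement (v + w) = disagreement v + disagreement w := by
  ext i
  simp only [disagreement, ave, Pi.add_apply, sum_add_distrib, add_div]
  ring

@[simp]
theorem disagreement_zero : disagreement (0 : Fin n → ℝ) = 0 := by
  ext; simp [disagreement, ave]

theorem continuous_disagreement : Continuous (disagreement : (Fin n → ℝ) → Fin n → ℝ) := by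
  unfold disagreement ave; fun_prop

theorem disagreement_laplacian_step {A : Matrix (Fin n) (Fin n) ℝ} (hA : A.IsSymm) (h : ℝ)
    (v : Fin n → ℝ) : disagreement (v - h • laplacian A *ᵥ v)
      = disagreement v - h • laplacian A *ᵥ disagreement v := by
  have hL : laplacian A *ᵥ disagreement v = laplacian A *ᵥ v := by
    ext i; simp only [laplacian_mulVec_apply, disagreement, sub_sub_sub_cancel_right]
  have hmean : ave (v - h • laplacian A *ᵥ v) = ave v := by
    simp [ave, sum_sub_distrib, ← mul_sum, sum_laplacian_mulVec hA]
  ext i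
  simp [disagreement, hL, hmean]
  ring

end Disagreement

theorem thetaSeq_succ_eq {n : ℕ} (L S : Matrix (Fin n) (Fin n) ℝ) (h : ℝ) (θ0 : Fin n → ℝ)
    (η : ℕ → Fin n → ℝ) (k : ℕ) :
    thetaSeq L S h θ0 η (k + 1) = (thetaSeq L S h θ0 η k - h • L *ᵥ thetaSeq L S h θ0 η k)
      + (S *ᵥ η k - h • L *ᵥ η k) := by
  rw [thetaSeq, mulVec_add, smul_add]
  abel

theorem tendsto_disagreement_thetaSeq {n : ℕ} {A : Matrix (Fin n) (Fin n) ℝ} (hA : A.IsSymm)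
    (hA0 : ∀ i j, 0 ≤ A i j) {d : ℝ} (hd : ∀ i, ∑ j, A i j ≤ d) {h : ℝ} (hh0 : 0 < h)
    (hhd : h * d < 1)
    (hconn : ∀ v : Fin n → ℝ, laplacian A *ᵥ v = 0 → ∃ a : ℝ, v = fun _ => a)
    (S : Matrix (Fin n) (Fin n) ℝ) (θ0 : Fin n → ℝ) {η : ℕ → Fin n → ℝ}
    (hη : Tendsto η atTop (𝓝 0)) :
    Tendsto (fun k => disagreement (thetaSeq (laplacian A) S h θ0 η k)) atTop (𝓝 0) := by
  obtain ⟨ρ, hρ0, hρ1, hρ⟩ := exists_norm_laplacian_step_le hA hA0 hd hh0 hhd hconn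
  set e := fun k => disagreement (thetaSeq (laplacian A) S h θ0 η k)
  set input := fun v => disagreement (S *ᵥ v - h • laplacian A *ᵥ v)
  have he : ∀ k, e (k + 1) = (e k - h • laplacian A *ᵥ e k) + input (η k) := fun k => by
    simp only [e, input, thetaSeq_succ_eq, disagreement_add, disagreement_laplacian_step hA]
  have hinput : Tendsto (fun k => ‖WithLp.toLp 2 (input (η k))‖) atTop (𝓝 0) := by
    have hc : Continuous fun v => ‖WithLp.toLp 2 (input v)‖ := by
      have := continuous_disagreement (n := n)
      fun_prop
    simpa [input, Function.comp_def] using (hc.tendsto 0).comp hη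
  have hnorm : Tendsto (fun k => ‖WithLp.toLp 2 (e k)‖) atTop (𝓝 0) := by
    refine tendsto_zero_of_le_mul_add hρ0 hρ1 (fun k => norm_nonneg _) (fun k => ?_) hinput
    rw [he, WithLp.toLp_add]
    calc _ ≤ ‖WithLp.toLp 2 (e k - h • laplacian A *ᵥ e k)‖ + ‖WithLp.toLp 2 (input (η k))‖ :=
          norm_add_le _ _
      _ ≤ ρ * ‖WithLp.toLp 2 (e k)‖ + ‖WithLp.toLp 2 (input (η k))‖ := by
          gcongr
          exact hρ _ (sum_disagreement _)
  simpa [Function.comp_def] using ((PiLp.continuous_ofLp 2 _).tendsto 0).comp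
    (tendsto_zero_iff_norm_tendsto_zero.2 hnorm)

open Real Set ENNReal

theorem lap_Ici {b : ℝ} (hb : 0 < b) {ε : ℝ} (hε : 0 ≤ ε) :
    lap b (Ici ε) = ENNReal.ofReal (exp (-ε / b) / 2) := by
  have hint : IntegrableOn (fun x => (2 * b)⁻¹ * exp (-b⁻¹ * x)) (Ioi ε) :=
    (integrableOn_exp_mul_Ioi (neg_lt_zero.2 (inv_pos.2 hb)) ε).const_mul _
  rw [lap, withDensity_apply _ measurableSet_Ici, setLIntegral_congr Ioi_ae_eq_Ici.symm,
    setLIntegral_congr_fun measurableSet_Ioi fun x hx => by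
      rw [abs_of_pos (hε.trans_lt hx), neg_div, div_eq_inv_mul, ← neg_mul],
    ← ofReal_integral_eq_lintegral_ofReal hint (.of_forall fun x => by positivity),
    integral_const_mul, integral_exp_mul_Ioi (neg_lt_zero.2 (inv_pos.2 hb))]
  congr 1
  field_simp

theorem lap_Iic_neg (b ε : ℝ) : lap b (Iic (-ε)) = lap b (Ici ε) := by
  have hdens : Measurable fun x : ℝ => ENNReal.ofReal ((2 * b)⁻¹ * exp (-|x| / b)) := by
    fun_prop
  rw [lap, withDensity_apply _ measurableSet_Iic, withDensity_apply _ measurableSet_Ici,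
    ← (Measure.measurePreserving_neg volume).setLIntegral_comp_preimage measurableSet_Iic hdens]
  simp

theorem lap_abs_ge_le {b : ℝ} (hb : 0 < b) {ε : ℝ} (hε : 0 < ε) :
    lap b {x | ε ≤ |x|} ≤ ENNReal.ofReal (b / ε) := by
  have hsub : {x : ℝ | ε ≤ |x|} ⊆ Iic (-ε) ∪ Ici ε := fun x (hx : ε ≤ |x|) => le_abs'.1 hx
  have hexp : exp (-ε / b) ≤ b / ε := by
    rw [neg_div, Real.exp_neg, inv_le_comm₀ (exp_pos _) (by positivity), inv_div]
    linarith [add_one_le_exp (ε / b)]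
  calc lap b {x | ε ≤ |x|} ≤ lap b (Iic (-ε)) + lap b (Ici ε) :=
        (measure_mono hsub).trans (measure_union_le _ _)
    _ = ENNReal.ofReal (exp (-ε / b)) := by
        rw [lap_Iic_neg, lap_Ici hb hε.le, ← ENNReal.ofReal_add (by positivity) (by positivity),
          add_halves]
    _ ≤ ENNReal.ofReal (b / ε) := ENNReal.ofReal_le_ofReal hexp

theorem ae_tendsto_zero_of_tsum_measure_abs_ge_ne_top {Ω : Type*} [MeasurableSpace Ω]
    {μ : Measure Ω} {X : ℕ → Ω → ℝ} {ε : ℕ → ℝ} (hε : Tendsto ε atTop (𝓝 0))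
    (hsum : ∑' k, μ {ω | ε k ≤ |X k ω|} ≠ ∞) :
    ∀ᵐ ω ∂μ, Tendsto (fun k => X k ω) atTop (𝓝 0) := by
  filter_upwards [ae_eventually_notMem hsum] with ω hω
  exact squeeze_zero_norm' (hω.mono fun k hk => (not_le.1 hk).le) hε

theorem ae_tendsto_zero_of_map_eq_lap {Ω : Type*} [MeasurableSpace Ω] {μ : Measure Ω}
    {c q : ℝ} (hc : 0 < c) (hq0 : 0 < q) (hq1 : q < 1) {X : ℕ → Ω → ℝ}
    (hX : ∀ k, Measurable (X k)) (hlaw : ∀ k, μ.map (X k) = lap (c * q ^ k)) :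
    ∀ᵐ ω ∂μ, Tendsto (fun k => X k ω) atTop (𝓝 0) := by
  obtain ⟨r, hqr, hr1⟩ := exists_between hq1
  have hr0 : 0 < r := hq0.trans hqr
  refine ae_tendsto_zero_of_tsum_measure_abs_ge_ne_top
    (tendsto_pow_atTop_nhds_zero_of_lt_one hr0.le hr1) ?_
  have hbound : ∀ k, μ {ω | r ^ k ≤ |X k ω|} ≤ ENNReal.ofReal (c * (q / r) ^ k) := fun k =>
    calc μ (X k ⁻¹' {x | r ^ k ≤ |x|}) = lap (c * q ^ k) {x | r ^ k ≤ |x|} := by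
          rw [← hlaw k, Measure.map_apply (hX k) (measurableSet_le measurable_const measurable_abs)]
      _ ≤ ENNReal.ofReal (c * q ^ k / r ^ k) := lap_abs_ge_le (by positivity) (by positivity)
      _ = ENNReal.ofReal (c * (q / r) ^ k) := by rw [div_pow, mul_div_assoc]
  have hsum : Summable fun k => c * (q / r) ^ k :=
    (summable_geometric_of_lt_one (by positivity) ((div_lt_one hr0).2 hqr)).mul_left c
  refine ne_top_of_le_ne_top ?_ (ENNReal.tsum_le_tsum hbound)
  rw [← ENNReal.ofReal_tsum_of_nonneg (fun k => by positivity) hsum]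
  exact ofReal_ne_top

theorem disagreement_tendsto_zero_general {n : ℕ} (hn : 0 < n)
    (A : Matrix (Fin n) (Fin n) ℝ) (hAsymm : A.IsSymm) (hApos : ∀ i j, 0 ≤ A i j)
    (L : Matrix (Fin n) (Fin n) ℝ)
    (hL : L = Matrix.diagonal (fun i => ∑ j, A i j) - A)
    (hconn : ∀ v : Fin n → ℝ, L.mulVec v = 0 → ∃ a : ℝ, v = fun _ => a)
    (h : ℝ) (hh0 : 0 < h)
    (hh1 : h < 1 / Finset.univ.sup'
      (Finset.univ_nonempty_iff.mpr (Fin.pos_iff_nonempty.mp hn)) (fun i => ∑ j, A i j))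
    (s c q : Fin n → ℝ)
    (hc : ∀ i, 0 < c i) (hq : ∀ i, q i ∈ Set.Ioo (|s i - 1|) 1)
    (P : Measure (ℕ → Fin n → ℝ)) [IsProbabilityMeasure P]
    (hlaw : ∀ (k : ℕ) (i : Fin n),
      Measure.map (fun ω : ℕ → Fin n → ℝ => ω k i) P = lap (c i * q i ^ k))
    (θ0 : Fin n → ℝ) :
    P {ω | Tendsto
        (fun k => fun i => thetaSeq L (Matrix.diagonal s) h θ0 ω k i
          - ave (thetaSeq L (Matrix.diagonal s) h θ0 ω k))
        atTop (nhds 0)} = 1 := by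
  subst hL
  set d := univ.sup' _ fun i => ∑ j, A i j
  have hd : ∀ i, ∑ j, A i j ≤ d := fun i => le_sup' (fun i => ∑ j, A i j) (mem_univ i)
  have hhd : h * d < 1 := (lt_div_iff₀ (one_div_pos.1 (hh0.trans hh1))).1 hh1
  have hnoise : ∀ᵐ ω ∂P, Tendsto ω atTop (𝓝 0) := by
    simp_rw [tendsto_pi_nhds, ae_all_iff]
    exact fun i => ae_tendsto_zero_of_map_eq_lap (hc i) ((abs_nonneg _).trans_lt (hq i).1)
      (hq i).2 (fun k => (measurable_pi_apply i).comp (measurable_pi_apply k)) (hlaw · i)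
  have hdis := hnoise.mono fun ω hω =>
    tendsto_disagreement_thetaSeq hAsymm hApos hd hh0 hhd hconn (diagonal s) θ0 hω
  exact (measure_congr (ae_eq_univ.2 (ae_iff.1 hdis))).trans measure_univ

/-- **Almost sure decay of the disagreement.** The disagreement vector
`θ̃(k) = θ(k) - ⟨θ(k)⟩𝟏` converges to `0` with probability one. -/
theorem disagreement_tendsto_zero {n : ℕ} (hn : 0 < n)
    (A : Matrix (Fin n) (Fin n) ℝ) (hAsymm : A.IsSymm) (hApos : ∀ i j, 0 ≤ A i j)
    (L : Matrix (Fin n) (Fin n) ℝ)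
    (hL : L = Matrix.diagonal (fun i => ∑ j, A i j) - A)
    (hconn : ∀ v : Fin n → ℝ, L.mulVec v = 0 → ∃ a : ℝ, v = fun _ => a)
    (h : ℝ) (hh0 : 0 < h)
    (hh1 : h < 1 / Finset.univ.sup'
      (Finset.univ_nonempty_iff.mpr (Fin.pos_iff_nonempty.mp hn)) (fun i => ∑ j, A i j))
    (s c q : Fin n → ℝ) (hs : ∀ i, s i ∈ Set.Ioo (0 : ℝ) 2)
    (hc : ∀ i, 0 < c i) (hq : ∀ i, q i ∈ Set.Ioo (|s i - 1|) 1)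
    (P : Measure (ℕ → Fin n → ℝ)) [IsProbabilityMeasure P]
    (hlaw : ∀ (k : ℕ) (i : Fin n),
      Measure.map (fun ω : ℕ → Fin n → ℝ => ω k i) P = lap (c i * q i ^ k))
    (hind : iIndepFun
      (fun (p : ℕ × Fin n) (ω : ℕ → Fin n → ℝ) => ω p.1 p.2) P)
    (θ0 : Fin n → ℝ) :
    P {ω | Tendsto
        (fun k => fun i => thetaSeq L (Matrix.diagonal s) h θ0 ω k i
          - ave (thetaSeq L (Matrix.diagonal s) h θ0 ω k))
        atTop (nhds 0)} = 1 :=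
  disagreement_tendsto_zero_general hn A hAsymm hApos L hL hconn h hh0 hh1 s c q hc hq P hlaw θ0
end

section
/- (p, r)-accuracy of the algorithm: Under the differentially private Laplacian consensus dynamics with the stated assumptions, for any p ∈ (0,1) the convergence point θ_∞ satisfies P{ |θ_∞ − ⟨θ₀⟩| ≤ r } ≥ 1 − p with r = (1/n) · sqrt( (2/p) Σ_{i=1}^n s_i² c_i² / (1 − q_i²) ). -/
/-!
Off the event where some noise series `∑_j η_i(j)` diverges, `θ_∞ = ⟨θ₀⟩`; on it,
`θ_∞ - ⟨θ₀⟩` is the limit of the partial sums `Y_m = ∑_i (s_i/n) ∑_{j<m} η_i(j)`.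
The noise terms are independent and centred with `Var η_i(j) = 2 c_i² q_i^{2j}`, so
`E[Y_m²] ≤ (2/n²) ∑_i s_i² c_i² / (1 - q_i²) = p r²` uniformly in `m`. Fatou's lemma carries
this bound to `liminf Y_m²`, and Markov's inequality gives `P{|θ_∞ - ⟨θ₀⟩| > r} ≤ p`.
-/

open MeasureTheory ProbabilityTheory Filter

open Finset Real
open scoped ENNReal Topology Nat

section Laplace

variable {b : ℝ}

lemma integrableOn_pow_mul_exp_neg_div_Ioi (hb : 0 < b) (k : ℕ) :
    IntegrableOn (fun x : ℝ => x ^ k * exp (-x / b)) (Set.Ioi 0) := by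
  refine (integrableOn_rpow_mul_exp_neg_mul_rpow (p := 1) (s := k) (b := b⁻¹)
    (by linarith [k.cast_nonneg (α := ℝ)]) one_pos (inv_pos.2 hb)).congr_fun
    (fun x _ => ?_) measurableSet_Ioi
  simp only [rpow_natCast, rpow_one, div_eq_inv_mul, neg_mul, mul_neg]

lemma integral_pow_mul_exp_neg_div_Ioi (hb : 0 < b) (k : ℕ) :
    ∫ x in Set.Ioi 0, x ^ k * exp (-x / b) = b ^ (k + 1) * k ! := by
  have h := integral_rpow_mul_exp_neg_mul_Ioi (a := k + 1) (by positivity) (inv_pos.2 hb)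
  rw [add_sub_cancel_right, Gamma_nat_eq_factorial, ← Nat.cast_succ, rpow_natCast,
    one_div, inv_inv] at h
  simpa [div_eq_inv_mul] using h

lemma integrable_pow_mul_exp_neg_abs_div (hb : 0 < b) (k : ℕ) :
    Integrable (fun x : ℝ => x ^ k * exp (-|x| / b)) := by
  have hIoi : IntegrableOn (fun x : ℝ => |x| ^ k * exp (-|x| / b)) (Set.Ioi 0) :=
    (integrableOn_pow_mul_exp_neg_div_Ioi hb k).congr_fun
      (fun x hx => by rw [abs_of_pos hx]) measurableSet_Ioi
  have hIic : IntegrableOn (fun x : ℝ => |x| ^ k * exp (-|x| / b)) (Set.Iic 0) := by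
    rw [← Measure.map_neg_eq_self (volume : Measure ℝ),
      measurableEmbedding_neg.integrableOn_map_iff]
    simpa [Function.comp_def] using Iff.mpr integrableOn_Ici_iff_integrableOn_Ioi hIoi
  refine Integrable.mono' (by simpa using hIic.union hIoi) (by fun_prop)
    (.of_forall fun x => ?_)
  rw [norm_mul, norm_pow, Real.norm_eq_abs, Real.norm_of_nonneg (exp_pos _).le]

lemma integral_pow_mul_exp_neg_abs_div_of_even (hb : 0 < b) {k : ℕ} (hk : Even k) :
    ∫ x : ℝ, x ^ k * exp (-|x| / b) = 2 * b ^ (k + 1) * k ! := by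
  have hsymm : (fun x : ℝ => x ^ k * exp (-|x| / b)) = fun x => |x| ^ k * exp (-|x| / b) :=
    funext fun x => by rw [hk.pow_abs]
  rw [hsymm, integral_comp_abs (f := fun x => x ^ k * exp (-x / b)),
    integral_pow_mul_exp_neg_div_Ioi hb, mul_assoc]

lemma integral_mul_exp_neg_abs_div (b : ℝ) : ∫ x : ℝ, x * exp (-|x| / b) = 0 := by
  have h := integral_neg_eq_self (fun x : ℝ => x * exp (-|x| / b)) volume
  simp only [abs_neg, neg_mul, integral_neg] at h
  linarith

lemma integral_lap (hb : 0 < b) (g : ℝ → ℝ) :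
    ∫ x, g x ∂lap b = (2 * b)⁻¹ * ∫ x, g x * exp (-|x| / b) := by
  rw [lap, integral_withDensity_eq_integral_toReal_smul (by fun_prop)
    (.of_forall fun _ => ENNReal.ofReal_lt_top), ← integral_const_mul]
  congr with x
  rw [ENNReal.toReal_ofReal (by positivity), smul_eq_mul]
  ring

lemma integrable_lap_iff (hb : 0 < b) {g : ℝ → ℝ} :
    Integrable g (lap b) ↔ Integrable (fun x => g x * exp (-|x| / b)) := by
  rw [lap, integrable_withDensity_iff (by fun_prop) (.of_forall fun _ => ENNReal.ofReal_lt_top)]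
  have hdens : ∀ x, g x * (ENNReal.ofReal ((2 * b)⁻¹ * exp (-|x| / b))).toReal
      = g x * exp (-|x| / b) * (2 * b)⁻¹ := fun x => by
    rw [ENNReal.toReal_ofReal (by positivity)]; ring
  simp_rw [hdens]
  exact integrable_mul_const_iff (by positivity : (2 * b)⁻¹ ≠ 0).isUnit _

lemma integral_id_lap (hb : 0 < b) : ∫ x, x ∂lap b = 0 := by
  rw [integral_lap hb, integral_mul_exp_neg_abs_div, mul_zero]

lemma integral_sq_lap (hb : 0 < b) : ∫ x, x ^ 2 ∂lap b = 2 * b ^ 2 := by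
  rw [integral_lap hb, integral_pow_mul_exp_neg_abs_div_of_even hb even_two]
  field_simp
  norm_num [Nat.factorial]
  ring

lemma memLp_two_id_lap (hb : 0 < b) : MemLp id 2 (lap b) := by
  rw [memLp_two_iff_integrable_sq aestronglyMeasurable_id, integrable_lap_iff hb]
  exact integrable_pow_mul_exp_neg_abs_div hb 2

end Laplace

section LaplaceRandomVariable

variable {Ω : Type*} [MeasurableSpace Ω] {μ : Measure Ω} {X : Ω → ℝ} {b : ℝ}

lemma memLp_two_of_map_eq_lap (hX : Measurable X) (hlaw : μ.map X = lap b) (hb : 0 < b) :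
    MemLp X 2 μ := by
  have h := memLp_two_id_lap hb
  rwa [← hlaw, memLp_map_measure_iff aestronglyMeasurable_id hX.aemeasurable] at h

lemma integral_eq_zero_of_map_eq_lap (hX : Measurable X) (hlaw : μ.map X = lap b)
    (hb : 0 < b) : μ[X] = 0 := by
  have h := integral_id_lap hb
  rwa [← hlaw, integral_map (f := fun x => x) hX.aemeasurable aestronglyMeasurable_id] at h

lemma variance_eq_of_map_eq_lap (hX : Measurable X) (hlaw : μ.map X = lap b) (hb : 0 < b) :
    Var[X; μ] = 2 * b ^ 2 := by
  rw [← variance_id_map hX.aemeasurable, hlaw,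
    variance_of_integral_eq_zero aemeasurable_id (integral_id_lap hb)]
  exact integral_sq_lap hb

end LaplaceRandomVariable

section IndependentSums

variable {Ω ι : Type*} [MeasurableSpace Ω] {μ : Measure Ω} [IsProbabilityMeasure μ]
  {X : ι → Ω → ℝ} {s : Finset ι}

lemma ProbabilityTheory.iIndepFun.lintegral_sq_sum_mul (hind : iIndepFun X μ)
    (hX : ∀ k ∈ s, MemLp (X k) 2 μ) (hmean : ∀ k ∈ s, μ[X k] = 0) (w : ι → ℝ) :
    ∫⁻ ω, ENNReal.ofReal ((∑ k ∈ s, w k * X k ω) ^ 2) ∂μ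
      = ENNReal.ofReal (∑ k ∈ s, w k ^ 2 * Var[X k; μ]) := by
  set Y : ι → Ω → ℝ := fun k ω => w k * X k ω
  have hY : ∀ k ∈ s, MemLp (Y k) 2 μ := fun k hk => (hX k hk).const_mul (w k)
  have hmean_sum : μ[∑ k ∈ s, Y k] = 0 := by
    simp only [Finset.sum_apply]
    rw [integral_finsetSum s fun k hk => (hY k hk).integrable one_le_two]
    exact Finset.sum_eq_zero fun k hk => by simp [Y, integral_const_mul, hmean k hk]
  have hvar : Var[∑ k ∈ s, Y k; μ] = ∑ k ∈ s, w k ^ 2 * Var[X k; μ] := by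
    rw [IndepFun.variance_sum hY fun k _ l _ hkl =>
      (hind.indepFun hkl).comp (measurable_const_mul (w k)) (measurable_const_mul (w l))]
    exact Finset.sum_congr rfl fun k _ => variance_const_mul (w k) (X k) μ
  rw [← hvar, ofReal_variance (memLp_finsetSum' s hY), evariance_eq_lintegral_ofReal, hmean_sum]
  simp [Y]

end IndependentSums

section FatouMarkov

variable {Ω : Type*} [MeasurableSpace Ω] {μ : Measure Ω}

lemma measure_tendsto_and_lt_abs_le {Y : ℕ → Ω → ℝ} {Z : Ω → ℝ} (hY : ∀ m, Measurable (Y m))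
    {V : ℝ≥0∞} (hV : ∀ m, ∫⁻ ω, ENNReal.ofReal (Y m ω ^ 2) ∂μ ≤ V) {r : ℝ} (hr : 0 < r) :
    μ {ω | Tendsto (fun m => Y m ω) atTop (𝓝 (Z ω)) ∧ r < |Z ω|} ≤ V / ENNReal.ofReal (r ^ 2) := by
  set F : Ω → ℝ≥0∞ := fun ω => liminf (fun m => ENNReal.ofReal (Y m ω ^ 2)) atTop
  have hmeas : ∀ m, Measurable fun ω => ENNReal.ofReal (Y m ω ^ 2) :=
    fun m => ((hY m).pow_const 2).ennreal_ofReal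
  have hsub : {ω | Tendsto (fun m => Y m ω) atTop (𝓝 (Z ω)) ∧ r < |Z ω|}
      ⊆ {ω | ENNReal.ofReal (r ^ 2) ≤ F ω} := by
    rintro ω ⟨hlim, hlt⟩
    have hF : F ω = ENNReal.ofReal (Z ω ^ 2) :=
      ((ENNReal.continuous_ofReal.tendsto _).comp (hlim.pow 2)).liminf_eq
    rw [Set.mem_ofPred_eq, hF, ← sq_abs (Z ω)]
    exact ENNReal.ofReal_le_ofReal (pow_le_pow_left₀ hr.le hlt.le 2)
  have hFint : ∫⁻ ω, F ω ∂μ ≤ V :=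
    (lintegral_liminf_le hmeas).trans (liminf_le_of_frequently_le' (.of_forall hV))
  calc μ {ω | Tendsto (fun m => Y m ω) atTop (𝓝 (Z ω)) ∧ r < |Z ω|}
      ≤ μ {ω | ENNReal.ofReal (r ^ 2) ≤ F ω} := measure_mono hsub
    _ ≤ (∫⁻ ω, F ω ∂μ) / ENNReal.ofReal (r ^ 2) :=
      meas_ge_le_lintegral_div (Measurable.liminf hmeas).aemeasurable
        (by simpa using hr.ne') ENNReal.ofReal_ne_top
    _ ≤ V / ENNReal.ofReal (r ^ 2) := by gcongr

lemma ofReal_one_sub_le_measure [IsProbabilityMeasure μ] {S : Set Ω} {p : ℝ} (hp : 0 ≤ p)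
    (h : μ Sᶜ ≤ ENNReal.ofReal p) : ENNReal.ofReal (1 - p) ≤ μ S := by
  rw [ENNReal.ofReal_sub _ hp, ENNReal.ofReal_one, tsub_le_iff_right]
  calc (1 : ℝ≥0∞) = μ Set.univ := measure_univ.symm
    _ ≤ μ S + μ Sᶜ := measure_univ_le_add_compl S
    _ ≤ μ S + ENNReal.ofReal p := by gcongr

end FatouMarkov

section NoiseSeries

variable {n : ℕ} (s : Fin n → ℝ)

noncomputable def noisePartialSum (m : ℕ) (η : ℕ → Fin n → ℝ) : ℝ :=
  ∑ i, s i / n * ∑ j ∈ range m, η j i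

lemma noisePartialSum_eq_sum_prod (m : ℕ) (η : ℕ → Fin n → ℝ) :
    noisePartialSum s m η = ∑ jk ∈ range m ×ˢ univ, s jk.2 / n * η jk.1 jk.2 := by
  rw [noisePartialSum, Finset.sum_product, Finset.sum_comm]
  simp only [Finset.mul_sum]

lemma measurable_noisePartialSum (m : ℕ) : Measurable (noisePartialSum s m) := by
  unfold noisePartialSum
  fun_prop

lemma tendsto_noisePartialSum_of_lt_abs {θ0 : Fin n → ℝ} {η : ℕ → Fin n → ℝ} {r : ℝ}
    (hr : 0 ≤ r) (h : r < |thetaInf θ0 s η - ave θ0|) :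
    Tendsto (fun m => noisePartialSum s m η) atTop (𝓝 (thetaInf θ0 s η - ave θ0)) := by
  by_cases hsum : ∀ i, Summable fun j => η j i
  · rw [thetaInf, if_pos hsum, add_sub_cancel_left]
    exact tendsto_finsetSum _ fun i _ => (hsum i).hasSum.tendsto_sum_nat.const_mul _
  · rw [thetaInf, if_neg hsum, sub_self, abs_zero] at h
    exact absurd h hr.not_gt

variable {s} {c q : Fin n → ℝ} {P : Measure (ℕ → Fin n → ℝ)} [IsProbabilityMeasure P]

lemma lintegral_sq_noisePartialSum_le (hc : ∀ i, 0 < c i) (hq0 : ∀ i, 0 < q i)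
    (hq1 : ∀ i, q i < 1)
    (hlaw : ∀ k i, P.map (fun η : ℕ → Fin n → ℝ => η k i) = lap (c i * q i ^ k))
    (hind : iIndepFun (fun (ji : ℕ × Fin n) (η : ℕ → Fin n → ℝ) => η ji.1 ji.2) P) (m : ℕ) :
    ∫⁻ η, ENNReal.ofReal (noisePartialSum s m η ^ 2) ∂P
      ≤ ENNReal.ofReal (2 / n ^ 2 * ∑ i, s i ^ 2 * c i ^ 2 / (1 - q i ^ 2)) := by
  have hb : ∀ ji : ℕ × Fin n, 0 < c ji.2 * q ji.2 ^ ji.1 :=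
    fun ji => mul_pos (hc _) (pow_pos (hq0 _) _)
  have hmeas : ∀ ji : ℕ × Fin n, Measurable fun η : ℕ → Fin n → ℝ => η ji.1 ji.2 :=
    fun ji => by fun_prop
  simp_rw [noisePartialSum_eq_sum_prod]
  rw [hind.lintegral_sq_sum_mul
    (fun ji _ => memLp_two_of_map_eq_lap (hmeas ji) (hlaw _ _) (hb ji))
    (fun ji _ => integral_eq_zero_of_map_eq_lap (hmeas ji) (hlaw _ _) (hb ji))]
  refine ENNReal.ofReal_le_ofReal ?_
  rw [Finset.sum_product, Finset.sum_comm, Finset.mul_sum]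
  refine Finset.sum_le_sum fun i _ => ?_
  calc ∑ j ∈ range m, (s i / n) ^ 2 * Var[fun η : ℕ → Fin n → ℝ => η j i; P]
      = 2 * s i ^ 2 * c i ^ 2 / n ^ 2 * ∑ j ∈ range m, (q i ^ 2) ^ j := by
        rw [Finset.mul_sum]
        refine Finset.sum_congr rfl fun j _ => ?_
        rw [variance_eq_of_map_eq_lap (hmeas (j, i)) (hlaw j i) (hb (j, i))]
        ring
    _ ≤ 2 * s i ^ 2 * c i ^ 2 / n ^ 2 * ((q i ^ 2) ^ 0 / (1 - q i ^ 2)) := by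
        rw [range_eq_Ico]
        gcongr
        exact geom_sum_Ico_le_of_lt_one (by positivity)
          (pow_lt_one₀ (hq0 i).le (hq1 i) two_ne_zero)
    _ = 2 / n ^ 2 * (s i ^ 2 * c i ^ 2 / (1 - q i ^ 2)) := by ring

end NoiseSeries

theorem accuracy_probability_bound_general {n : ℕ} (hn : 0 < n)
    (s c q : Fin n → ℝ) (hs : ∀ i, s i ∈ Set.Ioo (0 : ℝ) 2)
    (hc : ∀ i, 0 < c i) (hq : ∀ i, q i ∈ Set.Ioo (|s i - 1|) 1)
    (P : Measure (ℕ → Fin n → ℝ)) [IsProbabilityMeasure P]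
    (hlaw : ∀ (k : ℕ) (i : Fin n),
      Measure.map (fun ω : ℕ → Fin n → ℝ => ω k i) P = lap (c i * q i ^ k))
    (hind : iIndepFun
      (fun (p : ℕ × Fin n) (ω : ℕ → Fin n → ℝ) => ω p.1 p.2) P)
    (θ0 : Fin n → ℝ) :
    ∀ p : ℝ, p ∈ Set.Ioo (0 : ℝ) 1 →
      ENNReal.ofReal (1 - p) ≤
        P {ω | |thetaInf θ0 s ω - ave θ0| ≤
          (1 / (n : ℝ)) * Real.sqrt ((2 / p) * ∑ i, s i ^ 2 * c i ^ 2 / (1 - q i ^ 2))} := by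
  rintro p ⟨hp0, -⟩
  have hq0 : ∀ i, 0 < q i := fun i => (abs_nonneg _).trans_lt (hq i).1
  have hq_sq : ∀ i, 0 < 1 - q i ^ 2 := fun i =>
    sub_pos.2 (pow_lt_one₀ (hq0 i).le (hq i).2 two_ne_zero)
  set T := ∑ i, s i ^ 2 * c i ^ 2 / (1 - q i ^ 2)
  have hT : 0 < T :=
    Finset.sum_pos (fun i _ => div_pos (mul_pos (pow_pos (hs i).1 2) (pow_pos (hc i) 2)) (hq_sq i))
      (univ_nonempty_iff.2 (Fin.pos_iff_nonempty.1 hn))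
  set r := 1 / (n : ℝ) * Real.sqrt (2 / p * T)
  have hr : 0 < r := by positivity
  have hr2 : 2 / n ^ 2 * T / r ^ 2 = p := by
    rw [mul_pow, Real.sq_sqrt (by positivity)]
    field_simp
  apply ofReal_one_sub_le_measure hp0.le
  simp only [Set.compl_ofPred, not_le]
  calc P {ω | r < |thetaInf θ0 s ω - ave θ0|}
      ≤ P {ω | Tendsto (fun m => noisePartialSum s m ω) atTop (𝓝 (thetaInf θ0 s ω - ave θ0))
          ∧ r < |thetaInf θ0 s ω - ave θ0|} :=
        measure_mono fun ω h => ⟨tendsto_noisePartialSum_of_lt_abs s hr.le h, h⟩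
    _ ≤ ENNReal.ofReal (2 / n ^ 2 * T) / ENNReal.ofReal (r ^ 2) :=
        measure_tendsto_and_lt_abs_le (measurable_noisePartialSum s)
          (lintegral_sq_noisePartialSum_le hc hq0 (fun i => (hq i).2) hlaw hind) hr
    _ = ENNReal.ofReal p := by
        rw [← ENNReal.ofReal_div_of_pos (by positivity), hr2]

/-- **(p, r)-accuracy of the algorithm**: for any `p ∈ (0,1)`,
`P{ |θ_∞ - ⟨θ₀⟩| ≤ r } ≥ 1 - p` with
`r = (1/n)·√((2/p) ∑_i s_i² c_i² / (1 - q_i²))`. -/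
theorem accuracy_probability_bound {n : ℕ} (hn : 0 < n)
    (A : Matrix (Fin n) (Fin n) ℝ) (hAsymm : A.IsSymm) (hApos : ∀ i j, 0 ≤ A i j)
    (L : Matrix (Fin n) (Fin n) ℝ)
    (hL : L = Matrix.diagonal (fun i => ∑ j, A i j) - A)
    (hconn : ∀ v : Fin n → ℝ, L.mulVec v = 0 → ∃ a : ℝ, v = fun _ => a)
    (h : ℝ) (hh0 : 0 < h)
    (hh1 : h < 1 / Finset.univ.sup'
      (Finset.univ_nonempty_iff.mpr (Fin.pos_iff_nonempty.mp hn)) (fun i => ∑ j, A i j))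
    (s c q : Fin n → ℝ) (hs : ∀ i, s i ∈ Set.Ioo (0 : ℝ) 2)
    (hc : ∀ i, 0 < c i) (hq : ∀ i, q i ∈ Set.Ioo (|s i - 1|) 1)
    (P : Measure (ℕ → Fin n → ℝ)) [IsProbabilityMeasure P]
    (hlaw : ∀ (k : ℕ) (i : Fin n),
      Measure.map (fun ω : ℕ → Fin n → ℝ => ω k i) P = lap (c i * q i ^ k))
    (hind : iIndepFun
      (fun (p : ℕ × Fin n) (ω : ℕ → Fin n → ℝ) => ω p.1 p.2) P)
    (θ0 : Fin n → ℝ) :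
    ∀ p : ℝ, p ∈ Set.Ioo (0 : ℝ) 1 →
      ENNReal.ofReal (1 - p) ≤
        P {ω | |thetaInf θ0 s ω - ave θ0| ≤
          (1 / (n : ℝ)) * Real.sqrt ((2 / p) * ∑ i, s i ^ 2 * c i ^ 2 / (1 - q i ^ 2))} :=
  accuracy_probability_bound_general hn s c q hs hc hq P hlaw hind θ0
end

section
/- Attainment of the lower bound in the limit: With φ(α, s) = s² (α + (1−α)|s−1|)² / ( α² (1 − |s−1|)² [ 1 − (α + (1−α)|s−1|)² ] ) defined on (0,1) × (0,2), one has lim_{α → 0⁺} φ(α, 1) = 1. Consequently inf_{(α,s) ∈ (0,1)×(0,2)} φ(α, s) = 1, and this infimum is not attained. -/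
open Filter

/-- The normalized local variance cost
`φ(α, s) = s² (α + (1-α)|s-1|)² / (α² (1 - |s-1|)² [1 - (α + (1-α)|s-1|)²])`. -/
noncomputable def phi (α s : ℝ) : ℝ :=
  s ^ 2 * (α + (1 - α) * |s - 1|) ^ 2 /
    (α ^ 2 * (1 - |s - 1|) ^ 2 * (1 - (α + (1 - α) * |s - 1|) ^ 2))

lemma phi_at_one {α : ℝ} (hα : α ≠ 0) : phi α 1 = (1 - α ^ 2)⁻¹ := by
  simp only [phi, sub_self, abs_zero, mul_zero, add_zero, one_pow, sub_zero, one_mul]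
  rcases eq_or_ne (1 - α ^ 2) 0 with h | h
  · simp [h]
  · field_simp

lemma phi_gt_one {α s : ℝ} (hα : α ∈ Set.Ioo (0:ℝ) 1) (hs : s ∈ Set.Ioo (0:ℝ) 2) :
    1 < phi α s := by
  obtain ⟨hα0, hα1⟩ := hα
  obtain ⟨hs0, hs2⟩ := hs
  set b := |s - 1| with hb
  have hb0 : 0 ≤ b := abs_nonneg _
  have hb1 : b < 1 := by
    rw [hb, abs_lt]; constructor <;> linarith
  have hsb : 1 - b ≤ s := by
    have := neg_abs_le (s - 1)
    linarith
  set q := α + (1 - α) * b with hq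
  have hqα : α ≤ q := by nlinarith
  have hq1 : q < 1 := by nlinarith
  have hq0 : 0 < q := lt_of_lt_of_le hα0 hqα
  have h1q : 0 < 1 - q ^ 2 := by nlinarith
  have hD : 0 < α ^ 2 * (1 - b) ^ 2 * (1 - q ^ 2) := mul_pos (mul_pos (pow_pos hα0 2) (pow_pos (sub_pos.mpr hb1) 2)) h1q
  have h1 : (1 - b) ^ 2 ≤ s ^ 2 := by nlinarith
  have h2 : α ^ 2 ≤ q ^ 2 := by nlinarith
  have hNs : (1 - b) ^ 2 * α ^ 2 ≤ s ^ 2 * q ^ 2 :=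
    mul_le_mul h1 h2 (by positivity) (by positivity)
  rw [phi, ← hb, ← hq, lt_div_iff₀ hD]
  nlinarith [mul_pos (mul_pos (pow_pos hα0 2) (pow_pos (sub_pos.mpr hb1) 2)) (pow_pos hq0 2)]

/-- **Attainment of the lower bound in the limit**: `φ(α, 1) → 1` as `α → 0⁺`;
consequently the infimum of `φ` over `(0,1) × (0,2)` equals `1` and is not attained. -/
theorem phi_inf_is_one :
    Tendsto (fun α => phi α 1) (nhdsWithin 0 (Set.Ioi 0)) (nhds 1) ∧
    IsGLB ((fun p : ℝ × ℝ => phi p.1 p.2) '' (Set.Ioo (0 : ℝ) 1 ×ˢ Set.Ioo (0 : ℝ) 2)) 1 ∧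
    1 ∉ (fun p : ℝ × ℝ => phi p.1 p.2) '' (Set.Ioo (0 : ℝ) 1 ×ˢ Set.Ioo (0 : ℝ) 2) := by
  have htend : Tendsto (fun α => phi α 1) (nhdsWithin 0 (Set.Ioi 0)) (nhds 1) := by
    have h1 : Tendsto (fun α : ℝ => (1 - α ^ 2)⁻¹) (nhdsWithin 0 (Set.Ioi 0)) (nhds 1) := by
      have : ContinuousAt (fun α : ℝ => (1 - α ^ 2)⁻¹) 0 := by
        apply ContinuousAt.inv₀ (by fun_prop)
        norm_num
      simpa using this.continuousWithinAt.tendsto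
    refine h1.congr' ?_
    filter_upwards [self_mem_nhdsWithin] with α hα
    exact (phi_at_one (ne_of_gt hα)).symm
  refine ⟨htend, ⟨?_, ?_⟩, ?_⟩
  · rintro x ⟨⟨a, s⟩, hp, rfl⟩
    rw [Set.mem_prod] at hp
    exact le_of_lt (phi_gt_one hp.1 hp.2)
  · intro c hc
    refine ge_of_tendsto htend ?_
    have hIoo : Set.Ioo (0:ℝ) 1 ∈ nhdsWithin 0 (Set.Ioi 0) :=
      Ioo_mem_nhdsGT_of_mem (by norm_num)
    filter_upwards [hIoo] with α hα
    exact hc ⟨(α, 1), Set.mem_prod.mpr ⟨hα, by norm_num⟩, rfl⟩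
  · rintro ⟨⟨a, s⟩, hp, heq⟩
    rw [Set.mem_prod] at hp
    exact (ne_of_gt (phi_gt_one hp.1 hp.2)) heq
end
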